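/- arXiv:1911.13143 — 5 statements merged into one kernel-verified Lean document; each statement's English description precedes it below -/
import Mathlib

section
/- U is a set of uniqueness for B_+ if and only if λ_U is comparable with λ_X on B, i.e., there exist constants c1, c2 > 0 such that c1·λ_X(φ) ≤ λ_U(φ) ≤ c2·λ_X(φ) for all φ ∈ B. -/
section Aux

variable {X : Type*} [Fintype X] [Nonempty X]

lemma aux_sup'_affine (s : Finset X) (hs : s.Nonempty) (φ : X → ℝ) {a : ℝ} (ha : 0 ≤ a) (b : ℝ) :
    s.sup' hs (fun x => a * φ x + b) = a * s.sup' hs φ + b := by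
  apply le_antisymm
  · apply Finset.sup'_le; intro x hx
    have := Finset.le_sup' φ hx
    nlinarith
  · obtain ⟨y, hy, hy2⟩ := Finset.exists_mem_eq_sup' hs φ
    rw [hy2]
    exact Finset.le_sup' (fun x => a * φ x + b) hy

lemma aux_inf'_affine (s : Finset X) (hs : s.Nonempty) (φ : X → ℝ) {a : ℝ} (ha : 0 ≤ a) (b : ℝ) :
    s.inf' hs (fun x => a * φ x + b) = a * s.inf' hs φ + b := by
  apply le_antisymm
  · obtain ⟨y, hy, hy2⟩ := Finset.exists_mem_eq_inf' hs φ
    rw [hy2]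
    exact Finset.inf'_le (fun x => a * φ x + b) hy
  · apply Finset.le_inf'; intro x hx
    have := Finset.inf'_le φ hx
    nlinarith

lemma aux_sup'_neg (s : Finset X) (hs : s.Nonempty) (φ : X → ℝ) :
    s.sup' hs (fun x => -φ x) = -s.inf' hs φ := by
  apply le_antisymm
  · apply Finset.sup'_le; intro x hx
    have := Finset.inf'_le φ hx
    linarith
  · obtain ⟨y, hy, hy2⟩ := Finset.exists_mem_eq_inf' hs φ
    rw [hy2]
    exact Finset.le_sup' (fun x => -φ x) hy

lemma aux_inf'_neg (s : Finset X) (hs : s.Nonempty) (φ : X → ℝ) :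
    s.inf' hs (fun x => -φ x) = -s.sup' hs φ := by
  apply le_antisymm
  · obtain ⟨y, hy, hy2⟩ := Finset.exists_mem_eq_sup' hs φ
    rw [hy2]
    exact Finset.inf'_le (fun x => -φ x) hy
  · apply Finset.le_inf'; intro x hx
    have := Finset.le_sup' φ hx
    linarith

end Aux

theorem stmt_3 {X : Type*} [Fintype X] [Nonempty X]
    (B : Submodule ℝ (X → ℝ)) (h1 : (fun _ => (1:ℝ)) ∈ B)
    (U : Finset X) (hU : U.Nonempty)
    (lamU lamX : (X → ℝ) → ℝ)
    (hlamU : ∀ φ, lamU φ = Finset.univ.sup' Finset.univ_nonempty φ - U.inf' hU φ)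
    (hlamX : ∀ φ, lamX φ = Finset.univ.sup' Finset.univ_nonempty φ -
      Finset.univ.inf' Finset.univ_nonempty φ) :
    (∀ φ ∈ B, (∀ x, 0 ≤ φ x) → (∀ x ∈ U, φ x = 0) → φ = 0) ↔
    (∃ c1 c2 : ℝ, 0 < c1 ∧ 0 < c2 ∧
      ∀ φ ∈ B, c1 * lamX φ ≤ lamU φ ∧ lamU φ ≤ c2 * lamX φ) := by
  classical
  set M : (X → ℝ) → ℝ := fun φ => Finset.univ.sup' Finset.univ_nonempty φ with hM
  set mX : (X → ℝ) → ℝ := fun φ => Finset.univ.inf' Finset.univ_nonempty φ with hmX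
  set mU : (X → ℝ) → ℝ := fun φ => U.inf' hU φ with hmU
  -- basic facts
  have hle : ∀ φ (x : X), φ x ≤ M φ := fun φ x => Finset.le_sup' φ (Finset.mem_univ x)
  have hge : ∀ φ (x : X), mX φ ≤ φ x := fun φ x => Finset.inf'_le φ (Finset.mem_univ x)
  have hgeU : ∀ φ, ∀ x ∈ U, mU φ ≤ φ x := fun φ x hx => Finset.inf'_le φ hx
  have hmXmU : ∀ φ, mX φ ≤ mU φ := fun φ =>
    Finset.inf'_mono (f := φ) (Finset.subset_univ U) hU
  have hlamUX : ∀ φ, lamU φ ≤ lamX φ := by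
    intro φ; rw [hlamU, hlamX]; have := hmXmU φ; linarith
  have hlamU0 : ∀ φ, 0 ≤ lamU φ := by
    intro φ; rw [hlamU]
    obtain ⟨u, hu⟩ := hU
    have h1' := hgeU φ u hu
    have h2' := hle φ u
    linarith
  have hlamX0 : ∀ φ, 0 ≤ lamX φ := fun φ => le_trans (hlamU0 φ) (hlamUX φ)
  constructor
  · -- uniqueness → comparability
    intro huniq
    by_cases hconst : ∀ φ ∈ B, lamX φ = 0
    · refine ⟨1, 1, one_pos, one_pos, fun φ hφ => ?_⟩
      have h0 := hconst φ hφ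
      have h1' := hlamUX φ
      have h2' := hlamU0 φ
      constructor <;> nlinarith
    · push_neg at hconst
      obtain ⟨φ0, hφ0B, hφ0⟩ := hconst
      -- the compact set K
      set K : Set (X → ℝ) :=
        {ψ | ψ ∈ B ∧ (∀ x, ψ x ∈ Set.Icc (0:ℝ) 1) ∧ lamX ψ = 1} with hK
      -- continuity of lamX and lamU
      have hcontM : Continuous M := by
        exact Continuous.finset_sup'_apply Finset.univ_nonempty
          (f := fun x (ψ : X → ℝ) => ψ x) (fun i _ => continuous_apply i)
      have hcontmX : Continuous mX := by
        exact Continuous.finset_inf'_apply Finset.univ_nonempty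
          (f := fun x (ψ : X → ℝ) => ψ x) (fun i _ => continuous_apply i)
      have hcontmU : Continuous mU := by
        exact Continuous.finset_inf'_apply hU
          (f := fun x (ψ : X → ℝ) => ψ x) (fun i _ => continuous_apply i)
      have hcontlamU : Continuous lamU := by
        have : lamU = fun φ => M φ - mU φ := funext hlamU
        rw [this]; exact hcontM.sub hcontmU
      have hcontlamX : Continuous lamX := by
        have : lamX = fun φ => M φ - mX φ := funext hlamX
        rw [this]; exact hcontM.sub hcontmX
      -- K is compact
      have hKsub : K ⊆ Set.pi Set.univ (fun _ : X => Set.Icc (0:ℝ) 1) := by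
        intro ψ hψ x _; exact hψ.2.1 x
      have hKclosed : IsClosed K := by
        have hB : IsClosed (B : Set (X → ℝ)) := Submodule.closed_of_finiteDimensional B
        have h2 : IsClosed {ψ : X → ℝ | ∀ x, ψ x ∈ Set.Icc (0:ℝ) 1} := by
          have : {ψ : X → ℝ | ∀ x, ψ x ∈ Set.Icc (0:ℝ) 1} =
              Set.pi Set.univ (fun _ : X => Set.Icc (0:ℝ) 1) := by
            ext ψ; simp [Set.mem_pi, Pi.le_def, forall_and]
          rw [this]
          exact isClosed_set_pi (fun i _ => isClosed_Icc)
        have h3 : IsClosed {ψ : X → ℝ | lamX ψ = 1} :=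
          isClosed_eq hcontlamX continuous_const
        have hKeq : K = ((B : Set (X → ℝ)) ∩ {ψ : X → ℝ | ∀ x, ψ x ∈ Set.Icc (0:ℝ) 1}) ∩
            {ψ : X → ℝ | lamX ψ = 1} := by
          ext ψ; simp only [hK, Set.mem_setOf_eq, Set.mem_inter_iff, SetLike.mem_coe, and_assoc]
        rw [hKeq]
        exact (hB.inter h2).inter h3
      have hKcompact : IsCompact K := by
        refine IsCompact.of_isClosed_subset ?_ hKclosed hKsub
        exact isCompact_univ_pi (fun _ => isCompact_Icc)
      -- normalization map: given φ ∈ B with lamX φ > 0, normalized version is in K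
      have hnorm : ∀ φ ∈ B, lamX φ ≠ 0 → ∃ ψ ∈ K,
          lamU φ = lamX φ * lamU ψ := by
        intro φ hφB hφ
        have ht : 0 < lamX φ := lt_of_le_of_ne (hlamX0 φ) (Ne.symm hφ)
        set t := lamX φ
        set a := t⁻¹ with ha
        have ha0 : 0 ≤ a := inv_nonneg.2 ht.le
        set b := -(a * mX φ) with hb
        set ψ : X → ℝ := fun x => a * φ x + b with hψ
        have hψB : ψ ∈ B := by
          have : ψ = a • φ + b • (fun _ => (1:ℝ)) := by
            funext x; simp [hψ, Pi.add_apply, smul_eq_mul, mul_one]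
          rw [this]
          exact B.add_mem (B.smul_mem a hφB) (B.smul_mem b h1)
        have hMψ : M ψ = a * M φ + b := aux_sup'_affine _ _ φ ha0 b
        have hmXψ : mX ψ = a * mX φ + b := aux_inf'_affine _ _ φ ha0 b
        have hmUψ : mU ψ = a * mU φ + b := aux_inf'_affine _ _ φ ha0 b
        have hlamXψ : lamX ψ = 1 := by
          have h2 : M φ - mX φ = t := (hlamX φ).symm
          have hat : t⁻¹ * t = 1 := inv_mul_cancel₀ (ne_of_gt ht)
          calc lamX ψ = M ψ - mX ψ := hlamX ψ
            _ = a * M φ + b - (a * mX φ + b) := by rw [hMψ, hmXψ]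
            _ = a * (M φ - mX φ) := by ring
            _ = t⁻¹ * t := by rw [h2, ha]
            _ = 1 := hat
        have hrange : ∀ x, ψ x ∈ Set.Icc (0:ℝ) 1 := by
          intro x
          constructor
          · have := hge φ x
            simp only [hψ, hb]
            nlinarith
          · have h1' := hle φ x
            have h2' : M φ - mX φ = t := (hlamX φ).symm
            simp only [hψ, hb]
            have hat : a * t = 1 := inv_mul_cancel₀ (ne_of_gt ht)
            nlinarith
        refine ⟨ψ, ⟨hψB, hrange, hlamXψ⟩, ?_⟩
        have hq : lamU ψ = a * lamU φ := by
          calc lamU ψ = M ψ - mU ψ := hlamU ψ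
            _ = a * M φ + b - (a * mU φ + b) := by rw [hMψ, hmUψ]
            _ = a * (M φ - mU φ) := by ring
            _ = a * lamU φ := by rw [hlamU φ]
        rw [hq, ha]
        field_simp
      -- K is nonempty
      have hKne : K.Nonempty := by
        obtain ⟨ψ, hψK, _⟩ := hnorm φ0 hφ0B hφ0
        exact ⟨ψ, hψK⟩
      -- minimum of lamU on K
      obtain ⟨ψs, hψsK, hmin⟩ := hKcompact.exists_isMinOn hKne hcontlamU.continuousOn
      set c1 := lamU ψs with hc1
      have hc1pos : 0 < c1 := by
        rcases lt_or_eq_of_le (hlamU0 ψs) with h | h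
        · exact h
        · exfalso
          -- lamU ψs = 0 : contradiction with uniqueness
          obtain ⟨hψsB, hψsr, hψsX⟩ := hψsK
          have hM1 : M ψs = 1 ∧ mX ψs = 0 := by
            have h1' : M ψs - mX ψs = 1 := by rw [← hlamX ψs]; exact hψsX
            obtain ⟨x0⟩ := ‹Nonempty X›
            have h2' : M ψs ≤ 1 := by
              apply Finset.sup'_le; intro x _; exact (hψsr x).2
            have h3' : 0 ≤ mX ψs := by
              apply Finset.le_inf'; intro x _; exact (hψsr x).1
            constructor <;> linarith
          have hmU1 : mU ψs = 1 := by
            have : M ψs - mU ψs = 0 := by rw [← hlamU ψs]; exact h.symm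
            linarith [hM1.1]
          set χ : X → ℝ := fun x => 1 - ψs x with hχ
          have hχB : χ ∈ B := by
            have : χ = (fun _ => (1:ℝ)) - ψs := by funext x; simp [hχ]
            rw [this]; exact B.sub_mem h1 hψsB
          have hχ0 : ∀ x, 0 ≤ χ x := fun x => by simp [hχ]; exact (hψsr x).2
          have hχU : ∀ x ∈ U, χ x = 0 := by
            intro x hx
            have h1' := hgeU ψs x hx
            have h2' := (hψsr x).2
            simp [hχ]
            rw [hmU1] at h1'
            linarith
          have := huniq χ hχB hχ0 hχU
          -- then ψs = 1 constant, contradicting lamX ψs = 1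
          have hψs1 : ∀ x, ψs x = 1 := by
            intro x
            have := congrFun this x
            simp [hχ] at this
            linarith
          have : lamX ψs = 0 := by
            rw [hlamX]
            have hM' : Finset.univ.sup' Finset.univ_nonempty ψs = 1 := by
              apply le_antisymm
              · apply Finset.sup'_le; intro x _; exact (hψs1 x).le
              · obtain ⟨x0⟩ := ‹Nonempty X›
                calc (1:ℝ) = ψs x0 := (hψs1 x0).symm
                _ ≤ _ := hle ψs x0
            have hm' : Finset.univ.inf' Finset.univ_nonempty ψs = 1 := by
              apply le_antisymm
              · obtain ⟨x0⟩ := ‹Nonempty X›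
                calc _ ≤ ψs x0 := hge ψs x0
                _ = 1 := hψs1 x0
              · apply Finset.le_inf'; intro x _; exact (hψs1 x).ge
            rw [hM', hm']; ring
          rw [hψsX] at this; norm_num at this
      refine ⟨c1, 1, hc1pos, one_pos, fun φ hφ => ?_⟩
      constructor
      · by_cases hz : lamX φ = 0
        · rw [hz, mul_zero]; exact hlamU0 φ
        · obtain ⟨ψ, hψK, heq⟩ := hnorm φ hφ hz
          have := hmin hψK
          have ht : 0 < lamX φ := lt_of_le_of_ne (hlamX0 φ) (Ne.symm hz)
          rw [heq]
          have : c1 ≤ lamU ψ := hmin hψK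
          nlinarith
      · simpa using hlamUX φ
  · -- comparability → uniqueness
    rintro ⟨c1, c2, hc1, hc2, hcomp⟩ φ hφB hφ0 hφU
    set ψ : X → ℝ := fun x => -φ x with hψ
    have hψB : ψ ∈ B := by
      have : ψ = -φ := by funext x; simp [hψ]
      rw [this]; exact B.neg_mem hφB
    obtain ⟨hlow, _⟩ := hcomp ψ hψB
    -- mX φ = 0
    obtain ⟨u, hu⟩ := Finset.Nonempty.exists_mem hU
    have hmXφ : mX φ = 0 := by
      apply le_antisymm
      · calc mX φ ≤ φ u := hge φ u
        _ = 0 := hφU u hu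
      · apply Finset.le_inf'; intro x _; exact hφ0 x
    -- lamU ψ = max_U φ - min φ  = 0 - 0 ... compute
    have hMψ : M ψ = -(mX φ) := by
      rw [hM, hmX]
      rw [show ψ = fun x => -φ x from rfl]
      exact aux_sup'_neg _ _ φ
    have hmUψ : mU ψ = -(U.sup' hU φ) := by
      rw [hmU]
      rw [show ψ = fun x => -φ x from rfl]
      exact aux_inf'_neg _ _ φ
    have hsupU : U.sup' hU φ = 0 := by
      apply le_antisymm
      · apply Finset.sup'_le; intro x hx; exact (hφU x hx).le
      · calc (0:ℝ) = φ u := (hφU u hu).symm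
        _ ≤ _ := Finset.le_sup' φ hu
    have hlamUψ : lamU ψ = 0 := by
      calc lamU ψ = M ψ - mU ψ := hlamU ψ
        _ = 0 := by rw [hMψ, hmUψ, hmXφ, hsupU]; ring
    have hlamXψ : lamX ψ ≤ 0 := by
      rw [hlamUψ] at hlow
      nlinarith [hlamX0 ψ]
    have hMφ0 : M φ ≤ 0 := by
      have h' : lamX ψ = M ψ - mX ψ := hlamX ψ
      have hmXψ : mX ψ = -(M φ) := by
        rw [hmX, hM]
        rw [show ψ = fun x => -φ x from rfl]
        exact aux_inf'_neg _ _ φ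
      rw [h', hMψ, hmXψ, hmXφ] at hlamXψ
      linarith
    funext x
    have h1' := hφ0 x
    have h2' := hle φ x
    exact le_antisymm (le_trans h2' hMφ0) h1'
end

section
/- The MLE for a discrete exponential family e(B) and a sample x1,…,xn ∈ X exists if and only if {x1,…,xn} is a set of uniqueness for B_+. -/
open Finset Real

section Aux

variable {X : Type*} [Fintype X] [Nonempty X]

/-- Partition function. -/
noncomputable def mleZ (μ φ : X → ℝ) : ℝ := ∑ y, Real.exp (φ y) * μ y

/-- Log-likelihood. -/
noncomputable def mleG (μ : X → ℝ) {n : ℕ} (x : Fin n → X) (φ : X → ℝ) : ℝ :=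
  (∑ i, φ (x i)) - n * Real.log (mleZ μ φ)

/-- Max of a function on a finite nonempty type. -/
noncomputable def mleM (φ : X → ℝ) : ℝ := Finset.univ.sup' Finset.univ_nonempty φ

lemma mleZ_pos (μ : X → ℝ) (hμ : ∀ y, 0 < μ y) (φ : X → ℝ) : 0 < mleZ μ φ :=
  Finset.sum_pos (fun y _ => mul_pos (Real.exp_pos _) (hμ y)) Finset.univ_nonempty

lemma prod_eq_exp_mleG (μ : X → ℝ) {n : ℕ} (x : Fin n → X) (φ : X → ℝ) :
    (∏ i, Real.exp (φ (x i) - Real.log (∑ y, Real.exp (φ y) * μ y))) =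
      Real.exp (mleG μ x φ) := by
  rw [← Real.exp_sum]
  congr 1
  simp [mleG, mleZ, Finset.sum_sub_distrib, mul_comm]

lemma le_mleM (φ : X → ℝ) (y : X) : φ y ≤ mleM φ :=
  Finset.le_sup' φ (Finset.mem_univ y)

lemma exists_eq_mleM (φ : X → ℝ) : ∃ y, mleM φ = φ y := by
  obtain ⟨y, -, hy⟩ := Finset.exists_mem_eq_sup' Finset.univ_nonempty φ
  exact ⟨y, hy⟩

lemma mleM_smul (t : ℝ) (ht : 0 < t) (φ : X → ℝ) : mleM (t • φ) = t * mleM φ := by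
  apply le_antisymm
  · obtain ⟨y, hy⟩ := exists_eq_mleM (t • φ)
    rw [hy]
    have : φ y ≤ mleM φ := le_mleM φ y
    have := mul_le_mul_of_nonneg_left this ht.le
    simpa [smul_eq_mul] using this
  · obtain ⟨y, hy⟩ := exists_eq_mleM φ
    rw [hy]
    have : (t • φ) y ≤ mleM (t • φ) := le_mleM (t • φ) y
    simpa [smul_eq_mul] using this

lemma mleM_lipschitz : LipschitzWith 1 (mleM (X := X)) := by
  apply LipschitzWith.of_dist_le_mul
  intro φ ψ
  simp only [NNReal.coe_one, one_mul, Real.dist_eq, abs_sub_le_iff]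
  constructor
  · obtain ⟨y, hy⟩ := exists_eq_mleM φ
    have h1 : φ y - ψ y ≤ dist φ ψ := by
      have := dist_le_pi_dist φ ψ y
      rw [Real.dist_eq] at this
      exact (le_abs_self _).trans this
    have h2 : ψ y ≤ mleM ψ := le_mleM ψ y
    rw [hy]; linarith
  · obtain ⟨y, hy⟩ := exists_eq_mleM ψ
    have h1 : ψ y - φ y ≤ dist φ ψ := by
      have := dist_le_pi_dist φ ψ y
      rw [Real.dist_eq] at this
      calc ψ y - φ y = -(φ y - ψ y) := by ring
        _ ≤ |φ y - ψ y| := neg_le_abs _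
        _ ≤ dist φ ψ := this
    have h2 : φ y ≤ mleM φ := le_mleM φ y
    rw [hy]; linarith

lemma mleM_continuous : Continuous (mleM (X := X)) := mleM_lipschitz.continuous

lemma mleZ_continuous (μ : X → ℝ) : Continuous (mleZ μ) :=
  continuous_finset_sum _ fun y _ =>
    (Real.continuous_exp.comp (continuous_apply y)).mul continuous_const

lemma mleG_continuous (μ : X → ℝ) (hμ : ∀ y, 0 < μ y) {n : ℕ} (x : Fin n → X) :
    Continuous (mleG μ x) := by
  refine (continuous_finset_sum _ fun i _ => continuous_apply (x i)).sub ?_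
  exact continuous_const.mul ((mleZ_continuous μ).log fun φ => (mleZ_pos μ hμ φ).ne')

lemma log_mleZ_ge (μ : X → ℝ) (hμ : ∀ y, 0 < μ y) (φ : X → ℝ) :
    mleM φ + Finset.univ.inf' Finset.univ_nonempty (fun y => Real.log (μ y)) ≤
      Real.log (mleZ μ φ) := by
  obtain ⟨y, hy⟩ := exists_eq_mleM φ
  have h1 : Real.exp (φ y) * μ y ≤ mleZ μ φ := by
    apply Finset.single_le_sum (f := fun z => Real.exp (φ z) * μ z)
      (fun z _ => (mul_pos (Real.exp_pos _) (hμ z)).le) (Finset.mem_univ y)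
  have h2 : Real.log (Real.exp (φ y) * μ y) ≤ Real.log (mleZ μ φ) :=
    Real.log_le_log (mul_pos (Real.exp_pos _) (hμ y)) h1
  rw [Real.log_mul (Real.exp_ne_zero _) (hμ y).ne', Real.log_exp] at h2
  have h3 : Finset.univ.inf' Finset.univ_nonempty (fun z => Real.log (μ z)) ≤ Real.log (μ y) :=
    Finset.inf'_le _ (Finset.mem_univ y)
  rw [hy]; linarith

lemma mleG_add_const (μ : X → ℝ) (hμ : ∀ y, 0 < μ y) {n : ℕ} (x : Fin n → X)
    (φ : X → ℝ) (c : ℝ) : mleG μ x (fun y => φ y + c) = mleG μ x φ := by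
  have hZ : mleZ μ (fun y => φ y + c) = Real.exp c * mleZ μ φ := by
    simp only [mleZ, Real.exp_add, Finset.mul_sum]
    exact Finset.sum_congr rfl fun y _ => by ring
  unfold mleG
  rw [hZ, Real.log_mul (Real.exp_ne_zero _) (mleZ_pos μ hμ φ).ne', Real.log_exp]
  simp only [Finset.sum_add_distrib, Finset.sum_const, Finset.card_univ, Fintype.card_fin,
    nsmul_eq_mul]
  ring

end Aux

theorem stmt_5 {X : Type*} [Fintype X] [Nonempty X]
    (μ : X → ℝ) (hμ : ∀ y, 0 < μ y)
    (B : Submodule ℝ (X → ℝ)) (h1 : (fun _ => (1:ℝ)) ∈ B)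
    (n : ℕ) (hn : 0 < n) (x : Fin n → X) :
    (∃ φ0 ∈ B, ∀ φ ∈ B,
      (∏ i, Real.exp (φ (x i) - Real.log (∑ y, Real.exp (φ y) * μ y))) ≤
        ∏ i, Real.exp (φ0 (x i) - Real.log (∑ y, Real.exp (φ0 y) * μ y)))
    ↔ (∀ φ ∈ B, (∀ y, 0 ≤ φ y) → (∀ i, φ (x i) = 0) → φ = 0) := by
  have hZpos : ∀ φ : X → ℝ, 0 < mleZ μ φ := mleZ_pos μ hμ
  constructor
  · rintro ⟨φ0, hφ0B, hmax⟩ φ hφB hpos hvan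
    by_contra hne
    obtain ⟨y0, hy0⟩ : ∃ y, φ y ≠ 0 := by
      by_contra h; push_neg at h; exact hne (funext h)
    have hy0' : 0 < φ y0 := lt_of_le_of_ne (hpos y0) (Ne.symm hy0)
    have hsub : φ0 - φ ∈ B := Submodule.sub_mem B hφ0B hφB
    have hle := hmax (φ0 - φ) hsub
    rw [prod_eq_exp_mleG, prod_eq_exp_mleG, Real.exp_le_exp] at hle
    have hZlt : mleZ μ (φ0 - φ) < mleZ μ φ0 := by
      refine Finset.sum_lt_sum (fun y _ => ?_) ⟨y0, Finset.mem_univ y0, ?_⟩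
      · exact mul_le_mul_of_nonneg_right
          (Real.exp_le_exp.2 (by simp [Pi.sub_apply]; linarith [hpos y])) (hμ y).le
      · exact mul_lt_mul_of_pos_right
          (Real.exp_lt_exp.2 (by simp [Pi.sub_apply]; linarith)) (hμ y0)
    have hsum : ∑ i, (φ0 - φ) (x i) = ∑ i, φ0 (x i) := by
      refine Finset.sum_congr rfl fun i _ => ?_
      simp [Pi.sub_apply, hvan i]
    have hlog : Real.log (mleZ μ (φ0 - φ)) < Real.log (mleZ μ φ0) :=
      Real.log_lt_log (hZpos _) hZlt
    have hmul : (n:ℝ) * Real.log (mleZ μ (φ0 - φ)) < n * Real.log (mleZ μ φ0) :=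
      mul_lt_mul_of_pos_left hlog (by exact_mod_cast hn)
    have : mleG μ x φ0 < mleG μ x (φ0 - φ) := by
      unfold mleG; rw [hsum]; linarith
    linarith
  · intro hU
    set x0 : X := x ⟨0, hn⟩ with hx0
    set c1 : ℝ := Finset.univ.inf' Finset.univ_nonempty (fun y => Real.log (μ y)) with hc1
    set H : (X → ℝ) → ℝ := fun φ => (n:ℝ) * mleM φ - ∑ i, φ (x i) with hH
    -- upper bound on G
    have hGle : ∀ φ : X → ℝ, mleG μ x φ ≤ -(H φ) - n * c1 := by
      intro φ
      have h1 := log_mleZ_ge μ hμ φ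
      have h2 : (n:ℝ) * (mleM φ + c1) ≤ n * Real.log (mleZ μ φ) :=
        mul_le_mul_of_nonneg_left h1 (Nat.cast_nonneg n)
      simp only [mleG, hH]
      nlinarith
    have hHhom : ∀ (t : ℝ), 0 < t → ∀ φ, H (t • φ) = t * H φ := by
      intro t ht φ
      simp only [hH, mleM_smul t ht φ, Pi.smul_apply, smul_eq_mul, ← Finset.mul_sum]
      ring
    have hH0 : H 0 = 0 := by
      have : mleM (0 : X → ℝ) = 0 := by
        obtain ⟨y, hy⟩ := exists_eq_mleM (0 : X → ℝ)
        simpa using hy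
      simp [hH, this]
    -- positivity of H on the sphere slice
    have hHpos : ∀ φ : X → ℝ, φ ∈ B → φ x0 = 0 → ‖φ‖ = 1 → 0 < H φ := by
      intro φ hφB hφ0 hφn
      have hle : ∀ i, φ (x i) ≤ mleM φ := fun i => le_mleM φ (x i)
      have hsle : ∑ i, φ (x i) ≤ ∑ _i : Fin n, mleM φ := Finset.sum_le_sum fun i _ => hle i
      have hsle' : ∑ i, φ (x i) ≤ (n:ℝ) * mleM φ := by
        simpa [Finset.sum_const, Finset.card_univ, nsmul_eq_mul] using hsle
      rcases lt_or_eq_of_le hsle' with h | h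
      · simp only [hH]; linarith
      · exfalso
        -- all φ (x i) = mleM φ
        have hall : ∀ i : Fin n, mleM φ - φ (x i) = 0 := by
          intro i
          have hzero : ∑ i, (mleM φ - φ (x i)) = 0 := by
            rw [Finset.sum_sub_distrib]
            simp only [Finset.sum_const, Finset.card_univ, Fintype.card_fin, nsmul_eq_mul]
            linarith
          have := (Finset.sum_eq_zero_iff_of_nonneg
            (fun i _ => by linarith [hle i])).1 hzero i (Finset.mem_univ i)
          exact this
        set ψ : X → ℝ := fun y => mleM φ - φ y with hψ
        have hψB : ψ ∈ B := by
          have : ψ = (mleM φ) • (fun _ => (1:ℝ)) - φ := by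
            funext y; simp [hψ, Pi.sub_apply, Pi.smul_apply, smul_eq_mul]
          rw [this]
          exact Submodule.sub_mem B (Submodule.smul_mem B _ h1) hφB
        have hψ0 : ψ = 0 := hU ψ hψB (fun y => by simp [hψ]; exact le_mleM φ y)
          (fun i => hall i)
        have hφconst : ∀ y, φ y = mleM φ := by
          intro y
          have := congrFun hψ0 y
          simp [hψ] at this
          linarith
        have hM0 : mleM φ = 0 := by rw [← hφconst x0]; exact hφ0
        have : φ = 0 := funext fun y => by rw [hφconst y, hM0]; rfl
        rw [this, norm_zero] at hφn
        exact one_ne_zero hφn.symm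
    -- uniform lower bound m
    have hcoer : ∃ m : ℝ, 0 < m ∧ ∀ φ : X → ℝ, φ ∈ B → φ x0 = 0 → m * ‖φ‖ ≤ H φ := by
      set S : Set (X → ℝ) := {φ | φ ∈ B ∧ φ x0 = 0 ∧ ‖φ‖ = 1} with hS
      by_cases hSne : S.Nonempty
      · have hScl : IsClosed S := by
          apply IsClosed.inter (Submodule.closed_of_finiteDimensional B)
          exact IsClosed.inter (isClosed_eq (continuous_apply x0) continuous_const)
            (isClosed_eq continuous_norm continuous_const)
        have hSbd : Bornology.IsBounded S := by
          apply (Metric.isBounded_closedBall (x := (0 : X → ℝ)) (r := 1)).subset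
          intro φ hφ
          simp only [Metric.mem_closedBall, dist_zero_right]
          exact le_of_eq hφ.2.2
        have hScpt : IsCompact S := Metric.isCompact_of_isClosed_isBounded hScl hSbd
        have hHcont : Continuous H := by
          exact (continuous_const.mul mleM_continuous).sub
            (continuous_finset_sum _ fun i _ => continuous_apply (x i))
        obtain ⟨φm, hφmS, hφmmin⟩ := hScpt.exists_isMinOn hSne hHcont.continuousOn
        refine ⟨H φm, hHpos φm hφmS.1 hφmS.2.1 hφmS.2.2, ?_⟩
        intro φ hφB hφ0
        by_cases hz : φ = 0
        · rw [hz, hH0, norm_zero, mul_zero]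
        · have hnφ : 0 < ‖φ‖ := norm_pos_iff.2 hz
          set u : X → ℝ := ‖φ‖⁻¹ • φ with hu
          have huS : u ∈ S := by
            refine ⟨Submodule.smul_mem B _ hφB, ?_, ?_⟩
            · simp [hu, Pi.smul_apply, hφ0]
            · rw [hu, norm_smul, norm_inv, norm_norm, inv_mul_cancel₀ hnφ.ne']
          have hfact : φ = ‖φ‖ • u := by
            rw [hu, smul_smul, mul_inv_cancel₀ hnφ.ne', one_smul]
          have : H φ = ‖φ‖ * H u := by
            rw [hfact, hHhom ‖φ‖ hnφ u]
            rw [← hfact]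
          rw [this, mul_comm]
          exact mul_le_mul_of_nonneg_left (hφmmin huS) hnφ.le
      · refine ⟨1, one_pos, ?_⟩
        intro φ hφB hφ0
        by_cases hz : φ = 0
        · rw [hz, hH0, norm_zero, mul_zero]
        · exfalso
          have hnφ : 0 < ‖φ‖ := norm_pos_iff.2 hz
          refine hSne ⟨‖φ‖⁻¹ • φ, Submodule.smul_mem B _ hφB, ?_, ?_⟩
          · simp [Pi.smul_apply, hφ0]
          · rw [norm_smul, norm_inv, norm_norm, inv_mul_cancel₀ hnφ.ne']
    obtain ⟨m, hm, hmH⟩ := hcoer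
    set R : ℝ := (|mleG μ x 0 + n * c1| + 1) / m with hR
    have hmR : m * R = |mleG μ x 0 + n * c1| + 1 := by
      rw [hR, mul_div_cancel₀ _ hm.ne']
    have hRpos : 0 ≤ R := by
      apply div_nonneg _ hm.le
      positivity
    have hRbig : -(m * R) - n * c1 < mleG μ x 0 := by
      have := neg_abs_le (mleG μ x 0 + n * c1)
      rw [hmR]
      linarith
    -- compact set K
    set K : Set (X → ℝ) := {φ | φ ∈ B ∧ φ x0 = 0 ∧ ‖φ‖ ≤ R} with hK
    have hKcl : IsClosed K := by
      apply IsClosed.inter (Submodule.closed_of_finiteDimensional B)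
      exact IsClosed.inter (isClosed_eq (continuous_apply x0) continuous_const)
        (isClosed_le continuous_norm continuous_const)
    have hKbd : Bornology.IsBounded K := by
      apply (Metric.isBounded_closedBall (x := (0 : X → ℝ)) (r := R)).subset
      intro φ hφ
      simp only [Metric.mem_closedBall, dist_zero_right]
      exact hφ.2.2
    have hKcpt : IsCompact K := Metric.isCompact_of_isClosed_isBounded hKcl hKbd
    have h0K : (0 : X → ℝ) ∈ K := ⟨Submodule.zero_mem B, rfl, by rw [norm_zero]; exact hRpos⟩
    obtain ⟨φ0, hφ0K, hφ0max⟩ := hKcpt.exists_isMaxOn ⟨0, h0K⟩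
      (mleG_continuous μ hμ x).continuousOn
    refine ⟨φ0, hφ0K.1, ?_⟩
    intro φ hφB
    rw [prod_eq_exp_mleG, prod_eq_exp_mleG, Real.exp_le_exp]
    set ψ : X → ℝ := fun y => φ y - φ x0 with hψ
    have hψB : ψ ∈ B := by
      have : ψ = φ - (φ x0) • (fun _ => (1:ℝ)) := by
        funext y; simp [hψ, Pi.sub_apply, Pi.smul_apply, smul_eq_mul]
      rw [this]
      exact Submodule.sub_mem B hφB (Submodule.smul_mem B _ h1)
    have hψ0 : ψ x0 = 0 := by simp [hψ]
    have hGψ : mleG μ x ψ = mleG μ x φ := by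
      have := mleG_add_const μ hμ x ψ (φ x0)
      have heq : (fun y => ψ y + φ x0) = φ := by
        funext y; simp [hψ]
      rw [heq] at this
      exact this.symm
    rcases le_or_gt ‖ψ‖ R with h | h
    · rw [← hGψ]
      exact hφ0max ⟨hψB, hψ0, h⟩
    · have h1' : mleG μ x ψ ≤ -(H ψ) - n * c1 := hGle ψ
      have h2' : m * ‖ψ‖ ≤ H ψ := hmH ψ hψB hψ0
      have h3' : m * R < m * ‖ψ‖ := mul_lt_mul_of_pos_left h hm
      have h4' : mleG μ x 0 ≤ mleG μ x φ0 := hφ0max h0K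
      rw [← hGψ]
      linarith
end

section
/- With the restricted family on X̃ = {x ∈ X : δ(x) = 0}, the supremum of the restricted log-likelihood over e(B̃) equals the supremum of the log-likelihood over e(B): sup_{p̃ ∈ e(B̃)} l̃_{p̃}(x1,…,xn) = sup_{p ∈ e(B)} l_p(x1,…,xn). -/
/-!
Pushing a parameter `φ ∈ B` along `-δ` does not change the data term `∑ i, φ (x i)`, since `δ`
vanishes at the sample, while `exp (φ - t • δ)` dies off as `t → ∞` exactly off `X̃`. Hence the
full log-likelihood of `φ - t • δ` tends to the restricted log-likelihood of `φ`, so every restricted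
value is a limit of full values; conversely, shrinking the partition sum to `X̃` can only increase
the log-likelihood. Two sets of reals related in this way have the same supremum.
-/

open Real Filter Topology

theorem csSup_eq_csSup_of_subset_closure_of_forall_exists_le {α : Type*}
    [ConditionallyCompleteLinearOrder α] [TopologicalSpace α] [OrderClosedTopology α]
    {s t : Set α} (hs : s ⊆ closure t) (ht : ∀ y ∈ t, ∃ x ∈ s, y ≤ x) :
    sSup s = sSup t := by
  have hub : upperBounds s = upperBounds t :=
    subset_antisymm (fun u hu y hy => (ht y hy).elim fun _ ⟨hx, hyx⟩ => hyx.trans (hu hx))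
      (upperBounds_closure t ▸ upperBounds_mono_set hs)
  have hbdd : BddAbove s ↔ BddAbove t := by rw [BddAbove, BddAbove, hub]
  rcases t.eq_empty_or_nonempty with rfl | ht_ne
  · rw [closure_empty, Set.subset_empty_iff] at hs
    rw [hs]
  obtain ⟨x, hx, -⟩ := ht _ ht_ne.some_mem
  by_cases hbdd_t : BddAbove t
  · exact (isLUB_csSup ⟨x, hx⟩ (hbdd.2 hbdd_t)).unique
      ((isLUB_congr hub).2 (isLUB_csSup ht_ne hbdd_t))
  · rw [csSup_of_not_bddAbove hbdd_t, csSup_of_not_bddAbove (hbdd.not.2 hbdd_t)]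

theorem tendsto_exp_sub_mul_atTop {d : ℝ} (hd : 0 ≤ d) (a : ℝ) :
    Tendsto (fun t => exp (a - t * d)) atTop (𝓝 (if d = 0 then exp a else 0)) := by
  rcases hd.eq_or_lt with rfl | hd
  · simp
  rw [if_neg hd.ne']
  refine tendsto_exp_atBot.comp (tendsto_atBot_add_const_left _ a ?_)
  exact tendsto_neg_atTop_atBot.comp (tendsto_id.atTop_mul_const hd)

section LogLikelihood

variable {X : Type*} (μ : X → ℝ)

noncomputable def partitionFn (s : Finset X) (φ : X → ℝ) : ℝ :=
  ∑ y ∈ s, exp (φ y) * μ y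

/-- The log-likelihood of the sample `x` under the member `exp φ / partitionFn μ s φ` of the
exponential family on `s`. -/
noncomputable def logLikelihood {n : ℕ} (x : Fin n → X) (s : Finset X) (φ : X → ℝ) : ℝ :=
  ∑ i, φ (x i) - n * log (partitionFn μ s φ)

variable {μ}

theorem partitionFn_pos (hμ : ∀ y, 0 < μ y) {s : Finset X} (hs : s.Nonempty) (φ : X → ℝ) :
    0 < partitionFn μ s φ :=
  Finset.sum_pos (fun y _ => mul_pos (exp_pos _) (hμ y)) hs

theorem partitionFn_mono (hμ : ∀ y, 0 ≤ μ y) {s t : Finset X} (hst : s ⊆ t) (φ : X → ℝ) :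
    partitionFn μ s φ ≤ partitionFn μ t φ :=
  Finset.sum_le_sum_of_subset_of_nonneg hst fun y _ _ => mul_nonneg (exp_pos _).le (hμ y)

theorem logLikelihood_le_of_subset (hμ : ∀ y, 0 < μ y) {n : ℕ} (x : Fin n → X)
    {s t : Finset X} (hs : s.Nonempty) (hst : s ⊆ t) (φ : X → ℝ) :
    logLikelihood μ x t φ ≤ logLikelihood μ x s φ := by
  have hlog := log_le_log (partitionFn_pos hμ hs φ) (partitionFn_mono (fun y => (hμ y).le) hst φ)
  unfold logLikelihood
  gcongr

variable [Fintype X] {δ : X → ℝ}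

theorem tendsto_partitionFn_sub_smul (hδ : ∀ y, 0 ≤ δ y) (φ : X → ℝ) :
    Tendsto (fun t : ℝ => partitionFn μ Finset.univ (φ - t • δ)) atTop
      (𝓝 (partitionFn μ (Finset.univ.filter fun y => δ y = 0) φ)) := by
  have hlim : partitionFn μ (Finset.univ.filter fun y => δ y = 0) φ =
      ∑ y, (if δ y = 0 then exp (φ y) else 0) * μ y := by
    simp only [partitionFn, Finset.sum_filter, ite_mul, zero_mul]
  rw [hlim]
  exact tendsto_finsetSum _ fun y _ => (tendsto_exp_sub_mul_atTop (hδ y) (φ y)).mul_const _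

theorem tendsto_logLikelihood_sub_smul (hμ : ∀ y, 0 < μ y) {n : ℕ} (x : Fin n → X)
    (hδ : ∀ y, 0 ≤ δ y) (hδx : ∀ i, δ (x i) = 0)
    (hne : (Finset.univ.filter fun y => δ y = 0).Nonempty) (φ : X → ℝ) :
    Tendsto (fun t : ℝ => logLikelihood μ x Finset.univ (φ - t • δ)) atTop
      (𝓝 (logLikelihood μ x (Finset.univ.filter fun y => δ y = 0) φ)) := by
  have hdata : ∀ t : ℝ, ∑ i, (φ - t • δ) (x i) = ∑ i, φ (x i) := fun t => by
    simp [hδx]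
  simp only [logLikelihood, hdata]
  exact tendsto_const_nhds.sub <| ((continuousAt_log (partitionFn_pos hμ hne φ).ne').tendsto.comp
    (tendsto_partitionFn_sub_smul hδ φ)).const_mul _

end LogLikelihood

theorem stmt_8_general {X : Type*} [Fintype X]
    (μ : X → ℝ) (hμ : ∀ y, 0 < μ y)
    (B : Submodule ℝ (X → ℝ))
    (n : ℕ) (hn : 0 < n) (x : Fin n → X)
    (δ : X → ℝ) (hδB : δ ∈ B) (hδ0 : ∀ y, 0 ≤ δ y)
    (hδx : ∀ i, δ (x i) = 0) :
    sSup {l : ℝ | ∃ φ ∈ B, l = (∑ i, φ (x i)) -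
        n * Real.log (∑ y ∈ Finset.univ.filter (fun y => δ y = 0), Real.exp (φ y) * μ y)}
    = sSup {l : ℝ | ∃ φ ∈ B, l = (∑ i, φ (x i)) -
        n * Real.log (∑ y, Real.exp (φ y) * μ y)} := by
  set F := Finset.univ.filter fun y => δ y = 0
  have hF : F.Nonempty := ⟨x ⟨0, hn⟩, by simp [F, hδx]⟩
  change sSup {l | ∃ φ ∈ B, l = logLikelihood μ x F φ} =
    sSup {l | ∃ φ ∈ B, l = logLikelihood μ x Finset.univ φ}
  apply csSup_eq_csSup_of_subset_closure_of_forall_exists_le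
  · rintro _ ⟨φ, hφ, rfl⟩
    exact mem_closure_of_tendsto (tendsto_logLikelihood_sub_smul hμ x hδ0 hδx hF φ)
      (Eventually.of_forall fun t => ⟨φ - t • δ, B.sub_mem hφ (B.smul_mem t hδB), rfl⟩)
  · rintro _ ⟨φ, hφ, rfl⟩
    exact ⟨_, ⟨φ, hφ, rfl⟩, logLikelihood_le_of_subset hμ x hF (Finset.subset_univ F) φ⟩

theorem stmt_8 {X : Type*} [Fintype X] [Nonempty X]
    (μ : X → ℝ) (hμ : ∀ y, 0 < μ y)
    (B : Submodule ℝ (X → ℝ)) (h1 : (fun _ => (1:ℝ)) ∈ B)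
    (n : ℕ) (hn : 0 < n) (x : Fin n → X)
    (δ : X → ℝ) (hδB : δ ∈ B) (hδ0 : ∀ y, 0 ≤ δ y) (hδne : δ ≠ 0)
    (hδx : ∀ i, δ (x i) = 0) :
    sSup {l : ℝ | ∃ φ ∈ B, l = (∑ i, φ (x i)) -
        n * Real.log (∑ y ∈ Finset.univ.filter (fun y => δ y = 0), Real.exp (φ y) * μ y)}
    = sSup {l : ℝ | ∃ φ ∈ B, l = (∑ i, φ (x i)) -
        n * Real.log (∑ y, Real.exp (φ y) * μ y)} :=
  stmt_8_general μ hμ B n hn x δ hδB hδ0 hδx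
end

section
/- MLE for the Rademacher exponential family e(B^k) and sample x1,…,xn ∈ Q_k exists if and only if for every j = 1,…,k the set {r_j(x1),…,r_j(xn)} equals {−1, 1}. Equivalently, {x1,…,xn} is a set of uniqueness for (B^k)_+ if and only if for each coordinate j both values ±1 are attained by the sample. -/
/-!
Write `φ ∈ B^k` as `a + ∑ c_j r_j`. If the `j`-th coordinate of the sample is constantly `b`,
the sign function `s = ±r_j` that equals `1` on the sample yields both a nonzero nonnegative
element `1 - s` vanishing on the sample and a direction `φ ↦ φ + s` along which the
log-likelihood strictly increases (it gains `n` on the sample but less than `n` in the log-partition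
term). Conversely, if both values occur in every coordinate, flipping coordinate `j` at two sample
zeros of a nonnegative `φ` forces `c_j = 0`; and the log-likelihood, which ignores `a`, is
bounded by `C - 2 ‖c‖₁`, so it is coercive on `ℝ^k` and attains its maximum.
-/

open Real Finset Filter

section LogLikelihood

variable {α : Type*} [Fintype α] {n : ℕ}

noncomputable def logPartition (μ : α → ℝ) (φ : α → ℝ) : ℝ :=
  log (∑ χ, exp (φ χ) * μ χ)

noncomputable def logLik (μ : α → ℝ) (x : Fin n → α) (φ : α → ℝ) : ℝ :=
  ∑ i, φ (x i) - n * logPartition μ φ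

variable {μ : α → ℝ}

lemma partition_pos [Nonempty α] (hμ : ∀ χ, 0 < μ χ) (φ : α → ℝ) :
    0 < ∑ χ, exp (φ χ) * μ χ :=
  Finset.sum_pos (fun χ _ => mul_pos (exp_pos _) (hμ χ)) univ_nonempty

lemma prod_exp_sub_log_partition (x : Fin n → α) (φ : α → ℝ) :
    ∏ i, exp (φ (x i) - log (∑ χ, exp (φ χ) * μ χ)) = exp (logLik μ x φ) := by
  rw [← exp_sum, sum_sub_distrib, sum_const, card_univ, Fintype.card_fin, nsmul_eq_mul]
  rfl

lemma logPartition_const_add [Nonempty α] (hμ : ∀ χ, 0 < μ χ) (a : ℝ) (φ : α → ℝ) :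
    logPartition μ (fun χ => a + φ χ) = a + logPartition μ φ := by
  have hsum : ∑ χ, exp (a + φ χ) * μ χ = exp a * ∑ χ, exp (φ χ) * μ χ := by
    simp only [mul_sum, exp_add, mul_assoc]
  rw [logPartition, hsum, log_mul (exp_ne_zero a) (partition_pos hμ φ).ne', log_exp,
    logPartition]

lemma logLik_const_add [Nonempty α] (hμ : ∀ χ, 0 < μ χ) (x : Fin n → α) (a : ℝ)
    (φ : α → ℝ) : logLik μ x (fun χ => a + φ χ) = logLik μ x φ := by
  simp only [logLik, logPartition_const_add hμ, sum_add_distrib, sum_const, card_univ,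
    Fintype.card_fin, nsmul_eq_mul]
  ring

lemma add_log_le_logPartition (hμ : ∀ χ, 0 < μ χ) (φ : α → ℝ) (χ : α) :
    φ χ + log (μ χ) ≤ logPartition μ φ := by
  have hle : exp (φ χ) * μ χ ≤ ∑ χ, exp (φ χ) * μ χ :=
    single_le_sum (f := fun χ => exp (φ χ) * μ χ)
      (fun χ _ => (mul_pos (exp_pos _) (hμ χ)).le) (mem_univ χ)
  have := log_le_log (mul_pos (exp_pos _) (hμ χ)) hle
  rwa [log_mul (exp_ne_zero _) (hμ χ).ne', log_exp] at this

lemma logPartition_add_lt [Nonempty α] (hμ : ∀ χ, 0 < μ χ) (φ ψ : α → ℝ) {t : ℝ}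
    (hψ : ∀ χ, ψ χ ≤ t) (hψlt : ∃ χ, ψ χ < t) :
    logPartition μ (φ + ψ) < t + logPartition μ φ := by
  obtain ⟨χ₀, hχ₀⟩ := hψlt
  have hlt : ∑ χ, exp ((φ + ψ) χ) * μ χ < exp t * ∑ χ, exp (φ χ) * μ χ := by
    rw [mul_sum]
    refine sum_lt_sum (fun χ _ => ?_) ⟨χ₀, mem_univ _, ?_⟩
    · rw [← mul_assoc, ← exp_add, Pi.add_apply]
      exact mul_le_mul_of_nonneg_right (exp_le_exp.mpr (by linarith [hψ χ])) (hμ χ).le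
    · rw [← mul_assoc, ← exp_add, Pi.add_apply]
      exact mul_lt_mul_of_pos_right (exp_lt_exp.mpr (by linarith)) (hμ χ₀)
  have := log_lt_log (partition_pos hμ _) hlt
  rwa [log_mul (exp_ne_zero t) (partition_pos hμ φ).ne', log_exp] at this

lemma logLik_lt_logLik_add [Nonempty α] (hn : 0 < n) (hμ : ∀ χ, 0 < μ χ) (x : Fin n → α)
    (φ ψ : α → ℝ) {t : ℝ} (hψ : ∀ χ, ψ χ ≤ t) (hψlt : ∃ χ, ψ χ < t)
    (hψx : ∀ i, ψ (x i) = t) : logLik μ x φ < logLik μ x (φ + ψ) := by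
  have hsum : ∑ i, (φ + ψ) (x i) = ∑ i, φ (x i) + n * t := by
    simp [sum_add_distrib, hψx]
  have hlt := mul_lt_mul_of_pos_left (logPartition_add_lt hμ φ ψ hψ hψlt)
    (Nat.cast_pos.mpr hn : (0 : ℝ) < n)
  rw [logLik, logLik, hsum]
  linarith

lemma continuous_logLik [Nonempty α] (hμ : ∀ χ, 0 < μ χ) (x : Fin n → α) :
    Continuous (logLik μ x) := by
  have hsample : Continuous fun φ : α → ℝ => ∑ i, φ (x i) := by fun_prop
  have hZ : Continuous fun φ : α → ℝ => ∑ χ, exp (φ χ) * μ χ := by fun_prop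
  exact hsample.sub (continuous_const.mul (hZ.log fun φ => (partition_pos hμ φ).ne'))

end LogLikelihood

namespace Rademacher

variable {k n : ℕ}

def rad (j : Fin k) (χ : Fin k → Bool) : ℝ := if χ j then 1 else -1

def radComb (a : ℝ) (c : Fin k → ℝ) (χ : Fin k → Bool) : ℝ := a + ∑ j, c j * rad j χ

def radSpan (k : ℕ) : Submodule ℝ ((Fin k → Bool) → ℝ) :=
  Submodule.span ℝ ({fun _ => 1} ∪ Set.range rad)

lemma mem_radSpan_iff {φ : (Fin k → Bool) → ℝ} :
    φ ∈ radSpan k ↔ ∃ a c, radComb a c = φ := by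
  rw [radSpan, Submodule.span_union, Submodule.mem_sup]
  simp only [Submodule.mem_span_singleton, Submodule.mem_span_range_iff_exists_fun]
  constructor
  · rintro ⟨_, ⟨a, rfl⟩, _, ⟨c, rfl⟩, rfl⟩
    exact ⟨a, c, funext fun χ => by simp [radComb, Finset.sum_apply]⟩
  · rintro ⟨a, c, rfl⟩
    exact ⟨_, ⟨a, rfl⟩, _, ⟨c, rfl⟩, funext fun χ => by simp [radComb, Finset.sum_apply]⟩

lemma radComb_mem_radSpan (a : ℝ) (c : Fin k → ℝ) : radComb a c ∈ radSpan k :=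
  mem_radSpan_iff.mpr ⟨a, c, rfl⟩

lemma radComb_eq_const_add (a : ℝ) (c : Fin k → ℝ) :
    radComb a c = fun χ => a + radComb 0 c χ := by
  funext χ
  simp only [radComb, zero_add]

lemma continuous_radComb_zero : Continuous fun c : Fin k → ℝ => radComb 0 c := by
  unfold radComb rad
  fun_prop

def signAt (j : Fin k) (b : Bool) (χ : Fin k → Bool) : ℝ := if χ j = b then 1 else -1

lemma signAt_mem_radSpan (j : Fin k) (b : Bool) : signAt j b ∈ radSpan k := by
  refine mem_radSpan_iff.mpr ⟨0, Pi.single j (if b then 1 else -1), funext fun χ => ?_⟩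
  simp only [radComb, Pi.single_apply, ite_mul, zero_mul, sum_ite_eq', mem_univ, if_true,
    zero_add]
  cases b <;> cases h : χ j <;> simp [rad, signAt, h]

lemma signAt_le_one (j : Fin k) (b : Bool) (χ : Fin k → Bool) : signAt j b χ ≤ 1 := by
  unfold signAt; split <;> norm_num

lemma signAt_const_not (j : Fin k) (b : Bool) : signAt j b (fun _ => !b) = -1 := by
  simp [signAt]

lemma exists_forall_eq_of_not_both {x : Fin n → Fin k → Bool} {j : Fin k}
    (h : ¬((∃ i, x i j = true) ∧ ∃ i, x i j = false)) : ∃ b, ∀ i, x i j = b := by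
  by_cases ht : ∃ i, x i j = true
  · exact ⟨true, fun i => by simpa using fun hi => h ⟨ht, i, hi⟩⟩
  · exact ⟨false, fun i => by simpa using fun hi => ht ⟨i, hi⟩⟩

lemma abs_sum_rad_le {x : Fin n → Fin k → Bool} {j : Fin k}
    (hj : (∃ i, x i j = true) ∧ ∃ i, x i j = false) :
    |∑ i, rad j (x i)| ≤ n - 2 := by
  obtain ⟨⟨it, hit⟩, ⟨if_, hif⟩⟩ := hj
  have one_sub : 2 ≤ ∑ i, (1 - rad j (x i)) := by
    refine le_trans ?_ (single_le_sum (fun i _ => ?_) (mem_univ if_))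
    · simp [rad, hif]; norm_num
    · unfold rad; split <;> norm_num
  have one_add : 2 ≤ ∑ i, (1 + rad j (x i)) := by
    refine le_trans ?_ (single_le_sum (fun i _ => ?_) (mem_univ it))
    · simp [rad, hit]; norm_num
    · unfold rad; split <;> norm_num
  simp only [sum_sub_distrib, sum_add_distrib, sum_const, card_univ, Fintype.card_fin,
    nsmul_eq_mul, mul_one] at one_sub one_add
  exact abs_le.mpr ⟨by linarith, by linarith⟩

lemma radComb_zero_sign (c : Fin k → ℝ) :
    radComb 0 c (fun j => decide (0 ≤ c j)) = ∑ j, |c j| := by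
  simp only [radComb, zero_add]
  refine sum_congr rfl fun j _ => ?_
  by_cases h : 0 ≤ c j
  · simp [rad, h, abs_of_nonneg h]
  · simp [rad, h, abs_of_neg (not_le.mp h)]

lemma logLik_radComb_le {μ : (Fin k → Bool) → ℝ} (hμ : ∀ χ, 0 < μ χ)
    {x : Fin n → Fin k → Bool} (hx : ∀ j, (∃ i, x i j = true) ∧ ∃ i, x i j = false)
    (c : Fin k → ℝ) :
    logLik μ x (radComb 0 c) ≤ n * ∑ χ, |log (μ χ)| - 2 * ∑ j, |c j| := by
  set χs : Fin k → Bool := fun j => decide (0 ≤ c j)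
  have hsample : ∑ i, radComb 0 c (x i) ≤ (n - 2) * ∑ j, |c j| := by
    simp only [radComb, zero_add]
    rw [sum_comm, mul_sum]
    refine sum_le_sum fun j _ => ?_
    rw [← mul_sum, mul_comm]
    exact (le_abs_self _).trans <| by
      rw [abs_mul]; exact mul_le_mul_of_nonneg_right (abs_sum_rad_le (hx j)) (abs_nonneg _)
  have hpart : ∑ j, |c j| + log (μ χs) ≤ logPartition μ (radComb 0 c) := by
    have := add_log_le_logPartition hμ (radComb 0 c) χs
    rwa [show radComb 0 c χs = _ from radComb_zero_sign c] at this
  have hμs : -log (μ χs) ≤ ∑ χ, |log (μ χ)| :=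
    (neg_le_abs _).trans (single_le_sum (f := fun χ => |log (μ χ)|)
      (fun χ _ => abs_nonneg _) (mem_univ χs))
  have hn : (0 : ℝ) ≤ n := n.cast_nonneg
  have := mul_le_mul_of_nonneg_left hpart hn
  have := mul_le_mul_of_nonneg_left hμs hn
  rw [logLik]
  nlinarith

lemma tendsto_logLik_radComb_cocompact {μ : (Fin k → Bool) → ℝ} (hμ : ∀ χ, 0 < μ χ)
    {x : Fin n → Fin k → Bool} (hx : ∀ j, (∃ i, x i j = true) ∧ ∃ i, x i j = false) :
    Tendsto (fun c => logLik μ x (radComb 0 c)) (cocompact (Fin k → ℝ)) atBot := by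
  set C := n * ∑ χ, |log (μ χ)|
  have hlim : Tendsto (fun c : Fin k → ℝ => C - 2 * ‖c‖) (cocompact _) atBot :=
    tendsto_atBot_add_const_left _ C
      (tendsto_neg_atTop_atBot.comp (tendsto_norm_cocompact_atTop.const_mul_atTop two_pos))
  refine tendsto_atBot_mono (fun c => (logLik_radComb_le hμ hx c).trans ?_) hlim
  have : ‖c‖ ≤ ∑ j, |c j| :=
    (pi_norm_le_iff_of_nonneg (sum_nonneg fun j _ => abs_nonneg _)).mpr fun j =>
      single_le_sum (f := fun l => |c l|) (fun l _ => abs_nonneg _) (mem_univ j)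
  linarith

lemma radComb_update_not (a : ℝ) (c : Fin k → ℝ) (j : Fin k) (χ : Fin k → Bool) :
    radComb a c (Function.update χ j (!χ j)) = radComb a c χ - 2 * (c j * rad j χ) := by
  have hterm : ∀ l, c l * rad l (Function.update χ j (!χ j)) =
      c l * rad l χ - if l = j then 2 * (c j * rad j χ) else 0 := by
    intro l
    by_cases h : l = j
    · subst h; cases hχ : χ l <;> simp [rad, hχ] <;> ring
    · simp [rad, h]
  simp only [radComb, hterm, sum_sub_distrib, sum_ite_eq', mem_univ, if_true]
  ring

lemma exists_logLik_max_iff (hn : 0 < n) {μ : (Fin k → Bool) → ℝ} (hμ : ∀ χ, 0 < μ χ)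
    (x : Fin n → Fin k → Bool) :
    (∃ φ₀ ∈ radSpan k, ∀ φ ∈ radSpan k, logLik μ x φ ≤ logLik μ x φ₀) ↔
      ∀ j, (∃ i, x i j = true) ∧ ∃ i, x i j = false := by
  constructor
  · rintro ⟨φ₀, hφ₀, hmax⟩ j
    by_contra hj
    obtain ⟨b, hb⟩ := exists_forall_eq_of_not_both hj
    have hlt := logLik_lt_logLik_add hn hμ x φ₀ (signAt j b) (signAt_le_one j b)
      ⟨fun _ => !b, by rw [signAt_const_not]; norm_num⟩ (fun i => by simp [signAt, hb i])
    exact hlt.not_ge (hmax _ (add_mem hφ₀ (signAt_mem_radSpan j b)))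
  · intro hx
    obtain ⟨cs, hcs⟩ := ((continuous_logLik hμ x).comp continuous_radComb_zero).exists_forall_ge
      (tendsto_logLik_radComb_cocompact hμ hx)
    refine ⟨radComb 0 cs, radComb_mem_radSpan 0 cs, fun φ hφ => ?_⟩
    obtain ⟨a, c, rfl⟩ := mem_radSpan_iff.mp hφ
    rw [radComb_eq_const_add, logLik_const_add hμ]
    exact hcs c

lemma eq_zero_of_nonneg_of_vanishes_iff (hn : 0 < n) (x : Fin n → Fin k → Bool) :
    (∀ φ ∈ radSpan k, (∀ χ, 0 ≤ φ χ) → (∀ i, φ (x i) = 0) → φ = 0) ↔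
      ∀ j, (∃ i, x i j = true) ∧ ∃ i, x i j = false := by
  constructor
  · intro hu j
    by_contra hj
    obtain ⟨b, hb⟩ := exists_forall_eq_of_not_both hj
    have hmem : 1 - signAt j b ∈ radSpan k :=
      sub_mem (Submodule.subset_span (Set.mem_union_left _ rfl)) (signAt_mem_radSpan j b)
    have h := hu _ hmem (fun χ => sub_nonneg.mpr (signAt_le_one j b χ))
      (fun i => by simp [signAt, hb i])
    have := congrFun h fun _ => !b
    simp only [Pi.sub_apply, Pi.one_apply, signAt_const_not, Pi.zero_apply] at this
    norm_num at this
  · intro hx φ hφ hpos hzero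
    obtain ⟨a, c, rfl⟩ := mem_radSpan_iff.mp hφ
    have hc : c = 0 := funext fun j => by
      obtain ⟨⟨it, hit⟩, ⟨if_, hif⟩⟩ := hx j
      have ht := hpos (Function.update (x it) j (!x it j))
      have hf := hpos (Function.update (x if_) j (!x if_ j))
      rw [radComb_update_not, hzero] at ht hf
      simp only [rad, hit, hif, if_true, Bool.false_eq_true, if_false] at ht hf
      simp only [Pi.zero_apply]
      linarith
    subst hc
    have ha : a = 0 := by simpa [radComb] using hzero ⟨0, hn⟩
    subst ha
    funext χ
    simp [radComb]

end Rademacher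

open Rademacher in
theorem stmt_10 (k n : ℕ) (hn : 0 < n)
    (μ : (Fin k → Bool) → ℝ) (hμ : ∀ χ, 0 < μ χ)
    (x : Fin n → (Fin k → Bool))
    (Bk : Submodule ℝ ((Fin k → Bool) → ℝ))
    (hBk : Bk = Submodule.span ℝ
      ({(fun _ => (1:ℝ) : (Fin k → Bool) → ℝ)} ∪
        Set.range (fun j : Fin k => fun χ : Fin k → Bool => if χ j then (1:ℝ) else -1))) :
    ((∃ φ0 ∈ Bk, ∀ φ ∈ Bk,
      (∏ i, Real.exp (φ (x i) - Real.log (∑ χ, Real.exp (φ χ) * μ χ))) ≤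
        ∏ i, Real.exp (φ0 (x i) - Real.log (∑ χ, Real.exp (φ0 χ) * μ χ)))
      ↔ ∀ j, (∃ i, x i j = true) ∧ (∃ i, x i j = false)) ∧
    ((∀ φ ∈ Bk, (∀ χ, 0 ≤ φ χ) → (∀ i, φ (x i) = 0) → φ = 0)
      ↔ ∀ j, (∃ i, x i j = true) ∧ (∃ i, x i j = false)) := by
  subst hBk
  simp only [prod_exp_sub_log_partition, exp_le_exp]
  exact ⟨exists_logLik_max_iff hn hμ x, eq_zero_of_nonneg_of_vanishes_iff hn x⟩
end

section
/- MLE for e(B^{G_N}) and graphs G_1,…,G_n ∈ G_N exists if and only if ∪_{i=1}^n G_i = K_N and ∩_{i=1}^n G_i is the empty graph; i.e., every possible edge appears in some G_i and no edge appears in all G_i. -/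
open Real Filter Finset

namespace Stmt17Aux

variable {E : Type*} [Fintype E] [DecidableEq E]

noncomputable def chi (e : E) : (E → Bool) → ℝ :=
  fun H => 1 - 2 * (if H e then (1:ℝ) else 0)

lemma chi_eq (e : E) (H : E → Bool) : chi e H = if H e then (-1:ℝ) else 1 := by
  unfold chi; by_cases h : H e <;> simp [h] <;> ring

noncomputable def Zf (φ : (E → Bool) → ℝ) : ℝ := ∑ H : E → Bool, Real.exp (φ H)

lemma Zf_pos (φ : (E → Bool) → ℝ) : 0 < Zf φ :=
  Finset.sum_pos (fun _ _ => Real.exp_pos _) Finset.univ_nonempty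

variable {n : ℕ}

noncomputable def L (G : Fin n → (E → Bool)) (φ : (E → Bool) → ℝ) : ℝ :=
  ∑ i, (φ (G i) - Real.log (Zf φ))

lemma log_Zf_ge (φ : (E → Bool) → ℝ) (H : E → Bool) : φ H ≤ Real.log (Zf φ) := by
  have h1 : Real.exp (φ H) ≤ Zf φ :=
    Finset.single_le_sum (fun H _ => (Real.exp_pos (φ H)).le) (Finset.mem_univ H)
  calc φ H = Real.log (Real.exp (φ H)) := (Real.log_exp _).symm
    _ ≤ Real.log (Zf φ) := Real.log_le_log (Real.exp_pos _) h1

end Stmt17Aux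

namespace Stmt17Aux
variable {E : Type*} [Fintype E] [DecidableEq E] {n : ℕ}

lemma improve (hn : 0 < n) (G : Fin n → (E → Bool)) (φ0 : (E → Bool) → ℝ) (e : E) (b : Bool)
    (hall : ∀ i, G i e = b) :
    L G φ0 < L G (φ0 + (if b then (-1:ℝ) else 1) • chi e) := by
  haveI : Nonempty (Fin n) := Fin.pos_iff_nonempty.mp hn
  set s : ℝ := if b then (-1:ℝ) else 1 with hs
  set φ1 := φ0 + s • chi e with hφ1
  have hchiG : ∀ i, chi e (G i) = s := by
    intro i; rw [chi_eq, hall i, hs]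
  have hss : s * s = 1 := by rw [hs]; cases b <;> norm_num
  have hφ1G : ∀ i, φ1 (G i) = φ0 (G i) + 1 := by
    intro i; simp [hφ1, hchiG i, hss]
  -- Z1 < e * Z0
  have hZ : Zf φ1 < Real.exp 1 * Zf φ0 := by
    rw [Zf, Zf, Finset.mul_sum]
    apply Finset.sum_lt_sum
    · intro H _
      have h1 : s * chi e H ≤ 1 := by
        rw [chi_eq, hs]; cases b <;> by_cases h : H e <;> simp [h]
      simp only [hφ1, Pi.add_apply, Pi.smul_apply, smul_eq_mul]
      rw [← Real.exp_add]
      exact Real.exp_le_exp.mpr (by linarith)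
    · refine ⟨fun _ => !b, Finset.mem_univ _, ?_⟩
      have h1 : s * chi e (fun _ => !b) = -1 := by
        rw [chi_eq, hs]; cases b <;> simp
      simp only [hφ1, Pi.add_apply, Pi.smul_apply, smul_eq_mul, h1]
      rw [← Real.exp_add]
      exact Real.exp_lt_exp.mpr (by linarith)
  have hlog : Real.log (Zf φ1) < 1 + Real.log (Zf φ0) := by
    have := Real.log_lt_log (Zf_pos φ1) hZ
    rwa [Real.log_mul (Real.exp_ne_zero 1) (Zf_pos φ0).ne', Real.log_exp] at this
  rw [L, L]
  apply Finset.sum_lt_sum_of_nonempty Finset.univ_nonempty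
  intro i _
  rw [hφ1G i]
  linarith

noncomputable def psi (t : E → ℝ) : (E → Bool) → ℝ := fun H => ∑ e, t e * chi e H

lemma psi_mem (t : E → ℝ) :
    psi t ∈ Submodule.span ℝ
      ({(fun _ => (1:ℝ) : (E → Bool) → ℝ)} ∪ Set.range (chi (E := E))) := by
  have : psi t = ∑ e : E, t e • chi e := by
    funext H; rw [Finset.sum_apply]; rfl
  rw [this]
  exact Submodule.sum_mem _ fun e _ => Submodule.smul_mem _ _
    (Submodule.subset_span (Or.inr ⟨e, rfl⟩))

lemma decompose {φ : (E → Bool) → ℝ}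
    (hφ : φ ∈ Submodule.span ℝ
      ({(fun _ => (1:ℝ) : (E → Bool) → ℝ)} ∪ Set.range (chi (E := E)))) :
    ∃ c t, φ = fun H => c + psi t H := by
  induction hφ using Submodule.span_induction with
  | mem x hx =>
    rcases hx with hx | ⟨e, rfl⟩
    · refine ⟨1, 0, ?_⟩
      rw [Set.mem_singleton_iff] at hx
      subst hx; funext H; simp [psi]
    · refine ⟨0, fun e' => if e' = e then 1 else 0, ?_⟩
      funext H
      simp [psi, Finset.sum_ite_eq']
  | zero => exact ⟨0, 0, by funext H; simp [psi]⟩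
  | add x y _ _ ihx ihy =>
    obtain ⟨c1, t1, rfl⟩ := ihx
    obtain ⟨c2, t2, rfl⟩ := ihy
    refine ⟨c1 + c2, t1 + t2, ?_⟩
    funext H
    simp only [Pi.add_apply, psi]
    rw [show (∑ e, (t1 e + t2 e) * chi e H) = ∑ e, (t1 e * chi e H + t2 e * chi e H) from
      Finset.sum_congr rfl fun e _ => by ring]
    rw [Finset.sum_add_distrib]; ring
  | smul a x _ ih =>
    obtain ⟨c, t, rfl⟩ := ih
    refine ⟨a * c, a • t, ?_⟩
    funext H
    simp only [Pi.smul_apply, smul_eq_mul, psi, mul_add]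
    congr 1
    rw [Finset.mul_sum]
    exact Finset.sum_congr rfl fun e _ => by ring

lemma L_shift (G : Fin n → (E → Bool)) (c : ℝ) (t : E → ℝ) :
    L G (fun H => c + psi t H) = L G (psi t) := by
  have hZ : Zf (fun H => c + psi t H) = Real.exp c * Zf (psi t) := by
    rw [Zf, Zf, Finset.mul_sum]
    exact Finset.sum_congr rfl fun H _ => by rw [Real.exp_add]
  rw [L, L, hZ, Real.log_mul (Real.exp_ne_zero c) (Zf_pos _).ne', Real.log_exp]
  exact Finset.sum_congr rfl fun i _ => by ring

lemma F_continuous (G : Fin n → (E → Bool)) :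
    Continuous (fun t : E → ℝ => L G (psi t)) := by
  have h1 : ∀ H : E → Bool, Continuous (fun t : E → ℝ => psi t H) := fun H =>
    continuous_finset_sum _ fun e _ => (continuous_apply e).mul continuous_const
  have hZ : Continuous (fun t : E → ℝ => Zf (psi t)) :=
    continuous_finset_sum _ fun H _ => Real.continuous_exp.comp (h1 H)
  have hlog : Continuous (fun t : E → ℝ => Real.log (Zf (psi t))) :=
    hZ.log fun t => (Zf_pos _).ne'
  exact continuous_finset_sum _ fun i _ => (h1 (G i)).sub hlog

lemma F_bound (G : Fin n → (E → Bool))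
    (hcond : (∀ e, ∃ i, G i e = true) ∧ (∀ e, ∃ i, G i e = false)) (t : E → ℝ) :
    L G (psi t) ≤ -2 * ‖t‖ := by
  have hterm : ∀ i, psi t (G i) - Real.log (Zf (psi t)) ≤ 0 := fun i =>
    sub_nonpos.mpr (log_Zf_ge _ _)
  rcases isEmpty_or_nonempty E with hE | hE
  · have ht : t = 0 := Subsingleton.elim t 0
    subst ht
    rw [norm_zero, mul_zero]
    exact Finset.sum_nonpos fun i _ => hterm i
  · obtain ⟨estar, -, hmax⟩ := Finset.exists_max_image Finset.univ (fun e => |t e|)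
      Finset.univ_nonempty
    -- pick i with t estar * chi estar (G i) = -|t estar|
    obtain ⟨i, hkey⟩ : ∃ i, t estar * chi estar (G i) = -|t estar| := by
      rcases le_or_gt 0 (t estar) with hs | hs
      · obtain ⟨i, hi⟩ := hcond.1 estar
        exact ⟨i, by rw [chi_eq, hi, abs_of_nonneg hs]; simp⟩
      · obtain ⟨i, hi⟩ := hcond.2 estar
        exact ⟨i, by rw [chi_eq, hi, abs_of_neg hs]; simp⟩
    set Hstar := Function.update (G i) estar (!(G i estar)) with hHs
    have hpsiH : psi t Hstar = psi t (G i) + 2 * |t estar| := by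
      have hpt : ∀ e, t e * chi e Hstar =
          t e * chi e (G i) + (if e = estar then 2 * |t estar| else 0) := by
        intro e
        by_cases he : e = estar
        · subst he
          have h1 : chi e Hstar = - chi e (G i) := by
            rw [chi_eq, chi_eq, hHs, Function.update_self]
            cases h : G i e <;> simp [h]
          rw [h1, if_pos rfl]
          have := hkey
          nlinarith [hkey]
        · have h1 : Hstar e = G i e := Function.update_of_ne he _ _
          rw [chi_eq, chi_eq, h1, if_neg he, add_zero]
      rw [psi, psi]
      calc (∑ e, t e * chi e Hstar)
          = ∑ e, (t e * chi e (G i) + (if e = estar then 2 * |t estar| else 0)) :=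
            Finset.sum_congr rfl fun e _ => hpt e
        _ = (∑ e, t e * chi e (G i)) + 2 * |t estar| := by
            rw [Finset.sum_add_distrib, Finset.sum_ite_eq' Finset.univ estar]
            simp
    have hlZ : psi t (G i) + 2 * |t estar| ≤ Real.log (Zf (psi t)) := by
      rw [← hpsiH]; exact log_Zf_ge _ _
    have hnorm : ‖t‖ ≤ |t estar| := by
      rw [pi_norm_le_iff_of_nonneg (abs_nonneg _)]
      intro e; rw [Real.norm_eq_abs]; exact hmax e (Finset.mem_univ e)
    calc L G (psi t)
        = ∑ j, (psi t (G j) - Real.log (Zf (psi t))) := rfl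
      _ ≤ ∑ j, (if j = i then psi t (G i) - Real.log (Zf (psi t)) else 0) := by
          apply Finset.sum_le_sum
          intro j _
          by_cases hj : j = i
          · subst hj; simp
          · rw [if_neg hj]; exact hterm j
      _ = psi t (G i) - Real.log (Zf (psi t)) := by
          rw [Finset.sum_ite_eq' Finset.univ i]; simp
      _ ≤ -2 * |t estar| := by linarith
      _ ≤ -2 * ‖t‖ := by linarith

lemma exists_max (hn : 0 < n) (G : Fin n → (E → Bool))
    (hcond : (∀ e, ∃ i, G i e = true) ∧ (∀ e, ∃ i, G i e = false)) :
    ∃ t0 : E → ℝ, ∀ t : E → ℝ, L G (psi t) ≤ L G (psi t0) := by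
  have hbound := F_bound G hcond
  have hnormtop : Tendsto (fun t : E → ℝ => ‖t‖) (cocompact _) atTop :=
    tendsto_norm_cocompact_atTop
  have hg : Tendsto (fun t : E → ℝ => -2 * ‖t‖) (cocompact _) atBot := by
    have h2 : Tendsto (fun t : E → ℝ => 2 * ‖t‖) (cocompact _) atTop :=
      hnormtop.const_mul_atTop two_pos
    have heq : (fun t : E → ℝ => -2 * ‖t‖) = (Neg.neg ∘ fun t : E → ℝ => 2 * ‖t‖) := by
      funext t; simp [Function.comp]
    rw [heq]
    exact tendsto_neg_atTop_atBot.comp h2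
  exact (F_continuous G).exists_forall_ge (tendsto_atBot_mono hbound hg)

end Stmt17Aux

theorem stmt_17 (N n : ℕ) (hn : 0 < n)
    (G : Fin n → ({p : Fin N × Fin N // p.1 < p.2} → Bool))
    (B : Submodule ℝ (({p : Fin N × Fin N // p.1 < p.2} → Bool) → ℝ))
    (hB : B = Submodule.span ℝ
      ({(fun _ => (1:ℝ) : ({p : Fin N × Fin N // p.1 < p.2} → Bool) → ℝ)} ∪
        Set.range (fun e : {p : Fin N × Fin N // p.1 < p.2} =>
          fun H : {p : Fin N × Fin N // p.1 < p.2} → Bool =>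
            1 - 2 * (if H e then (1:ℝ) else 0)))) :
    (∃ φ0 ∈ B, ∀ φ ∈ B,
      (∏ i, Real.exp (φ (G i) -
          Real.log (∑ H : {p : Fin N × Fin N // p.1 < p.2} → Bool, Real.exp (φ H)))) ≤
        ∏ i, Real.exp (φ0 (G i) -
          Real.log (∑ H : {p : Fin N × Fin N // p.1 < p.2} → Bool, Real.exp (φ0 H))))
    ↔ ((∀ e, ∃ i, G i e = true) ∧ (∀ e, ∃ i, G i e = false)) := by
  have hr : (fun e : {p : Fin N × Fin N // p.1 < p.2} =>
      fun H : {p : Fin N × Fin N // p.1 < p.2} → Bool =>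
        1 - 2 * (if H e then (1:ℝ) else 0)) = Stmt17Aux.chi := rfl
  rw [hr] at hB
  subst hB
  have key : ∀ φ ψ : ({p : Fin N × Fin N // p.1 < p.2} → Bool) → ℝ,
      ((∏ i, Real.exp (φ (G i) -
          Real.log (∑ H : {p : Fin N × Fin N // p.1 < p.2} → Bool, Real.exp (φ H)))) ≤
        ∏ i, Real.exp (ψ (G i) -
          Real.log (∑ H : {p : Fin N × Fin N // p.1 < p.2} → Bool, Real.exp (ψ H)))) ↔
      Stmt17Aux.L G φ ≤ Stmt17Aux.L G ψ := by
    intro φ ψ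
    rw [← Real.exp_sum, ← Real.exp_sum, Real.exp_le_exp]
    exact Iff.rfl
  constructor
  · rintro ⟨φ0, hmem, hmax⟩
    have himpgen : ∀ (e : {p : Fin N × Fin N // p.1 < p.2}) (b : Bool),
        ¬ (∀ i, G i e = b) := by
      intro e b hall
      have himp := Stmt17Aux.improve hn G φ0 e b hall
      have hmem1 : φ0 + (if b then (-1:ℝ) else 1) • Stmt17Aux.chi e ∈
          Submodule.span ℝ ({(fun _ => (1:ℝ))} ∪ Set.range Stmt17Aux.chi) :=
        Submodule.add_mem _ hmem
          (Submodule.smul_mem _ _ (Submodule.subset_span (Or.inr ⟨e, rfl⟩)))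
      have := (key _ φ0).mp (hmax _ hmem1)
      linarith
    constructor
    · intro e
      by_contra hc
      push_neg at hc
      exact himpgen e false (fun i => by
        cases h : G i e
        · rfl
        · exact absurd h (hc i))
    · intro e
      by_contra hc
      push_neg at hc
      exact himpgen e true (fun i => by
        cases h : G i e
        · exact absurd h (hc i)
        · rfl)
  · intro hcond
    obtain ⟨t0, ht0⟩ := Stmt17Aux.exists_max hn G hcond
    refine ⟨Stmt17Aux.psi t0, Stmt17Aux.psi_mem t0, ?_⟩
    intro φ hφ
    obtain ⟨c, t, rfl⟩ := Stmt17Aux.decompose hφ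
    refine (key (fun H => c + Stmt17Aux.psi t H) (Stmt17Aux.psi t0)).mpr ?_
    rw [Stmt17Aux.L_shift]
    exact ht0 t
end
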